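/- Let U0 : X0 × D → X0 × D* and U1 : X1 × D* → X1 × D be bijective linear block maps between complex vector spaces with block inverses U0⁻¹ = [[α0,β0],[γ0,δ0]] : X0 × D* → X0 × D and U1⁻¹ = [[α1,β1],[γ1,δ1]] : X1 × D → X1 × D*. Assume I − D1∘D0 is bijective on D (so U = F_ℓ(U0,U1) is defined) and I − δ1∘δ0 is bijective on D*. Then for every x0 ∈ X0 and x1 ∈ X1 there exist unique backward trajectories, i.e. unique sequences η0 : ℕ → X0, η1 : ℕ → X1 with η0(0) = x0, η1(0) = x1, and d : {m ≥ 1} → D, d* : {m ≥ 1} → D*, such that for all m ≥ 1, U0(η0(m), d(m)) = (η0(m−1), d*(m)) and U1(η1(m), d*(m)) = (η1(m−1), d(m)); moreover Uᵐ(η0(m), η1(m)) = (x0, x1) for all m ∈ ℕ, so the backward trajectory computes the negative powers of U whenever they exist. -/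
import Mathlib


/-- **Backward trajectories compute negative powers of the feedback connection.**
`U0 : X0 × D → X0 × D*` and `U1 : X1 × D* → X1 × D` are bijective block maps with block
inverses `U0⁻¹ = [[α0,β0],[γ0,δ0]]` and `U1⁻¹ = [[α1,β1],[γ1,δ1]]`.  Assuming `I − D1∘D0`
is bijective on `D` (so that `U = F_ℓ(U0,U1)` is defined) and `I − δ1∘δ0` is bijective on
`D*`, for every `x0, x1` there exist unique backward trajectories, and they satisfy
`Uᵐ(η0 m, η1 m) = (x0, x1)` for all `m`. -/
theorem stmt_3 {X0 X1 D Ds : Type*}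
    [AddCommGroup X0] [Module ℂ X0] [AddCommGroup X1] [Module ℂ X1]
    [AddCommGroup D] [Module ℂ D] [AddCommGroup Ds] [Module ℂ Ds]
    (A0 : X0 →ₗ[ℂ] X0) (B0 : D →ₗ[ℂ] X0) (C0 : X0 →ₗ[ℂ] Ds) (D0 : D →ₗ[ℂ] Ds)
    (A1 : X1 →ₗ[ℂ] X1) (B1 : Ds →ₗ[ℂ] X1) (C1 : X1 →ₗ[ℂ] D) (D1 : Ds →ₗ[ℂ] D)
    (α0 : X0 →ₗ[ℂ] X0) (β0 : Ds →ₗ[ℂ] X0) (γ0 : X0 →ₗ[ℂ] D) (δ0 : Ds →ₗ[ℂ] D)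
    (α1 : X1 →ₗ[ℂ] X1) (β1 : D →ₗ[ℂ] X1) (γ1 : X1 →ₗ[ℂ] Ds) (δ1 : D →ₗ[ℂ] Ds)
    -- `[[α0,β0],[γ0,δ0]]` is a two-sided inverse of `U0`
    (hinv0l : ∀ (x : X0) (f : D),
        α0 (A0 x + B0 f) + β0 (C0 x + D0 f) = x ∧ γ0 (A0 x + B0 f) + δ0 (C0 x + D0 f) = f)
    (hinv0r : ∀ (x : X0) (fs : Ds),
        A0 (α0 x + β0 fs) + B0 (γ0 x + δ0 fs) = x ∧ C0 (α0 x + β0 fs) + D0 (γ0 x + δ0 fs) = fs)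
    -- `[[α1,β1],[γ1,δ1]]` is a two-sided inverse of `U1`
    (hinv1l : ∀ (x : X1) (fs : Ds),
        α1 (A1 x + B1 fs) + β1 (C1 x + D1 fs) = x ∧ γ1 (A1 x + B1 fs) + δ1 (C1 x + D1 fs) = fs)
    (hinv1r : ∀ (x : X1) (f : D),
        A1 (α1 x + β1 f) + B1 (γ1 x + δ1 f) = x ∧ C1 (α1 x + β1 f) + D1 (γ1 x + δ1 f) = f)
    (hbij : Function.Bijective (LinearMap.id - D1 ∘ₗ D0 : D →ₗ[ℂ] D))
    (hbijδ : Function.Bijective (LinearMap.id - δ1 ∘ₗ δ0 : Ds →ₗ[ℂ] Ds))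
    -- `U` is the feedback connection `F_ℓ(U0, U1)`
    (U : (X0 × X1) →ₗ[ℂ] (X0 × X1))
    (hU : ∀ (x0 : X0) (x1 : X1) (f : D) (fs : Ds),
        fs = C0 x0 + D0 f → f = C1 x1 + D1 fs →
        U (x0, x1) = (A0 x0 + B0 f, A1 x1 + B1 fs)) :
    ∀ (x0 : X0) (x1 : X1),
      (∃! q : (ℕ → X0) × (ℕ → X1) × (ℕ → D) × (ℕ → Ds),
          q.1 0 = x0 ∧ q.2.1 0 = x1 ∧
          ∀ m : ℕ,
            A0 (q.1 (m + 1)) + B0 (q.2.2.1 m) = q.1 m ∧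
            C0 (q.1 (m + 1)) + D0 (q.2.2.1 m) = q.2.2.2 m ∧
            A1 (q.2.1 (m + 1)) + B1 (q.2.2.2 m) = q.2.1 m ∧
            C1 (q.2.1 (m + 1)) + D1 (q.2.2.2 m) = q.2.2.1 m) ∧
      (∀ (η0 : ℕ → X0) (η1 : ℕ → X1) (d : ℕ → D) (ds : ℕ → Ds),
          η0 0 = x0 → η1 0 = x1 →
          (∀ m : ℕ,
            A0 (η0 (m + 1)) + B0 (d m) = η0 m ∧
            C0 (η0 (m + 1)) + D0 (d m) = ds m ∧
            A1 (η1 (m + 1)) + B1 (ds m) = η1 m ∧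
            C1 (η1 (m + 1)) + D1 (ds m) = d m) →
          ∀ m : ℕ, (U ^ m) (η0 m, η1 m) = (x0, x1))  := by
  classical
  intro x0 x1
  set T : Ds →ₗ[ℂ] Ds := (LinearMap.id - δ1 ∘ₗ δ0) with hT
  -- key: any solution of the four equations satisfies the backward formulas
  have key : ∀ (y0 : X0) (y1 : X1) (a : X0) (b : X1) (f : D) (fs : Ds),
      A0 a + B0 f = y0 → C0 a + D0 f = fs →
      A1 b + B1 fs = y1 → C1 b + D1 fs = f →
      a = α0 y0 + β0 fs ∧ f = γ0 y0 + δ0 fs ∧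
      b = α1 y1 + β1 f ∧ fs = γ1 y1 + δ1 f := by
    intro y0 y1 a b f fs h1 h2 h3 h4
    have k0 := hinv0l a f
    rw [h1, h2] at k0
    have k1 := hinv1l b fs
    rw [h3, h4] at k1
    exact ⟨k0.1.symm, k0.2.symm, k1.1.symm, k1.2.symm⟩
  have Tval : ∀ (y0 : X0) (y1 : X1) (a : X0) (b : X1) (f : D) (fs : Ds),
      A0 a + B0 f = y0 → C0 a + D0 f = fs →
      A1 b + B1 fs = y1 → C1 b + D1 fs = f →
      T fs = γ1 y1 + δ1 (γ0 y0) := by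
    intro y0 y1 a b f fs h1 h2 h3 h4
    obtain ⟨-, hf, -, hfs⟩ := key y0 y1 a b f fs h1 h2 h3 h4
    have hfs2 : fs = γ1 y1 + (δ1 (γ0 y0) + δ1 (δ0 fs)) := by
      conv_lhs => rw [hfs, hf, map_add]
    simp only [hT, LinearMap.sub_apply, LinearMap.id_apply, LinearMap.comp_apply]
    calc fs - δ1 (δ0 fs)
        = (γ1 y1 + (δ1 (γ0 y0) + δ1 (δ0 fs))) - δ1 (δ0 fs) := by rw [← hfs2]
      _ = γ1 y1 + δ1 (γ0 y0) := by abel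
  -- uniqueness of a one-step backward solution
  have uniq_sol : ∀ (y0 : X0) (y1 : X1) (a a' : X0) (b b' : X1) (f f' : D) (fs fs' : Ds),
      A0 a + B0 f = y0 → C0 a + D0 f = fs →
      A1 b + B1 fs = y1 → C1 b + D1 fs = f →
      A0 a' + B0 f' = y0 → C0 a' + D0 f' = fs' →
      A1 b' + B1 fs' = y1 → C1 b' + D1 fs' = f' →
      a = a' ∧ b = b' ∧ f = f' ∧ fs = fs' := by
    intro y0 y1 a a' b b' f f' fs fs' h1 h2 h3 h4 h1' h2' h3' h4'
    have hfs : fs = fs' := hbijδ.1 (by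
      rw [Tval y0 y1 a b f fs h1 h2 h3 h4, Tval y0 y1 a' b' f' fs' h1' h2' h3' h4'])
    obtain ⟨ka, kf, kb, -⟩ := key y0 y1 a b f fs h1 h2 h3 h4
    obtain ⟨ka', kf', kb', -⟩ := key y0 y1 a' b' f' fs' h1' h2' h3' h4'
    have hf : f = f' := by rw [kf, kf', hfs]
    exact ⟨by rw [ka, ka', hfs], by rw [kb, kb', hf], hf, hfs⟩
  -- the one-step backward map
  let step : X0 × X1 → (X0 × X1) × D × Ds := fun y =>
    let fs := Function.surjInv hbijδ.2 (γ1 y.2 + δ1 (γ0 y.1))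
    ((α0 y.1 + β0 fs, α1 y.2 + β1 (γ0 y.1 + δ0 fs)), γ0 y.1 + δ0 fs, fs)
  have stepspec : ∀ y : X0 × X1,
      A0 ((step y).1.1) + B0 ((step y).2.1) = y.1 ∧
      C0 ((step y).1.1) + D0 ((step y).2.1) = (step y).2.2 ∧
      A1 ((step y).1.2) + B1 ((step y).2.2) = y.2 ∧
      C1 ((step y).1.2) + D1 ((step y).2.2) = (step y).2.1 := by
    intro y
    set fs := Function.surjInv hbijδ.2 (γ1 y.2 + δ1 (γ0 y.1)) with hfsdef
    have hTfs : T fs = γ1 y.2 + δ1 (γ0 y.1) := Function.surjInv_eq hbijδ.2 _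
    have hfs_eq : fs = γ1 y.2 + δ1 (γ0 y.1 + δ0 fs) := by
      have h5 : fs - δ1 (δ0 fs) = γ1 y.2 + δ1 (γ0 y.1) := by
        simpa [hT, LinearMap.sub_apply] using hTfs
      rw [map_add, ← add_assoc, ← h5]
      abel
    have h0 := hinv0r y.1 fs
    have h1 := hinv1r y.2 (γ0 y.1 + δ0 fs)
    rw [← hfs_eq] at h1
    exact ⟨h0.1, h0.2, h1.1, h1.2⟩
  -- the backward trajectory
  let p : ℕ → X0 × X1 := fun n => Nat.rec (x0, x1) (fun _ y => (step y).1) n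
  have hp0 : p 0 = (x0, x1) := rfl
  have hpsucc : ∀ n, p (n + 1) = (step (p n)).1 := fun n => rfl
  refine ⟨⟨⟨fun m => (p m).1, fun m => (p m).2, fun m => (step (p m)).2.1,
      fun m => (step (p m)).2.2⟩, ⟨rfl, rfl, fun m => stepspec (p m)⟩, ?_⟩, ?_⟩
  · -- uniqueness
    rintro ⟨η0, η1, d, ds⟩ ⟨h0, h1, hrec⟩
    dsimp only at h0 h1 hrec
    have states : ∀ m, η0 m = (p m).1 ∧ η1 m = (p m).2 := by
      intro m
      induction m with
      | zero => exact ⟨h0, h1⟩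
      | succ n ih =>
        obtain ⟨e1, e2, e3, e4⟩ := hrec n
        obtain ⟨s1, s2, s3, s4⟩ := stepspec (p n)
        rw [ih.1] at e1
        rw [ih.2] at e3
        obtain ⟨ga, gb, -, -⟩ :=
          uniq_sol (p n).1 (p n).2 (η0 (n+1)) ((step (p n)).1.1) (η1 (n+1))
            ((step (p n)).1.2) (d n) ((step (p n)).2.1) (ds n) ((step (p n)).2.2)
            e1 e2 e3 e4 s1 s2 s3 s4
        exact ⟨ga, gb⟩
    have dds : ∀ m, d m = (step (p m)).2.1 ∧ ds m = (step (p m)).2.2 := by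
      intro m
      obtain ⟨e1, e2, e3, e4⟩ := hrec m
      obtain ⟨s1, s2, s3, s4⟩ := stepspec (p m)
      rw [(states m).1] at e1
      rw [(states m).2] at e3
      obtain ⟨-, -, gf, gfs⟩ :=
        uniq_sol (p m).1 (p m).2 (η0 (m+1)) ((step (p m)).1.1) (η1 (m+1))
          ((step (p m)).1.2) (d m) ((step (p m)).2.1) (ds m) ((step (p m)).2.2)
          e1 e2 e3 e4 s1 s2 s3 s4
      exact ⟨gf, gfs⟩
    refine Prod.ext ?_ (Prod.ext ?_ (Prod.ext ?_ ?_)) <;> funext m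
    · exact (states m).1
    · exact (states m).2
    · exact (dds m).1
    · exact (dds m).2
  · -- powers of U
    intro η0 η1 d ds h0 h1 hrec m
    have hstep : ∀ n, U (η0 (n + 1), η1 (n + 1)) = (η0 n, η1 n) := by
      intro n
      obtain ⟨e1, e2, e3, e4⟩ := hrec n
      rw [hU (η0 (n+1)) (η1 (n+1)) (d n) (ds n) e2.symm e4.symm, e1, e3]
    induction m with
    | zero => rw [h0, h1]; simp
    | succ n ih =>
      rw [pow_succ, Module.End.mul_apply, hstep n, ih]
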